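/- For m = 5 candidates and k = 3, the vote distribution x with x[{c2,c4}] = x[{c2,c5}] = x[{c4,c5}] = x[{c1,c2,c5}] = 1/4 (0 otherwise) admits a committee W = {c1,c2,c3} that is Droop core-stable but not weakly priceable. -/

import Mathlib

/-!
Droop core-stability is a finite check: every voter group carries weight `1/4`, so it says
that at most `|W'|` of the four supported groups prefer `W'` to `{c1,c2,c3}`.
Weak priceability fails because the groups `{c2,c4}`, `{c2,c5}` and `{c4,c5}` must pay more
than `1`, `1` and `2` towards `c2, c4, c5`; with weight `1/4` that is more than `1`, while these
three candidates have a total budget of `3 · 1/3 = 1`.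
-/

/-- The counterexample distribution for `m = 5`, `k = 3` (candidate `cᵢ` is
`i - 1 : Fin 5`): mass `1/4` on `{c2,c4}, {c2,c5}, {c4,c5}, {c1,c2,c5}`. -/
def x16 : Finset (Fin 5) → ℚ := fun A =>
  if A = {1, 3} ∨ A = {1, 4} ∨ A = {3, 4} ∨ A = {0, 1, 4} then 1/4 else 0

open Finset

def supp16 : Finset (Finset (Fin 5)) := {{1, 3}, {1, 4}, {3, 4}, {0, 1, 4}}

lemma x16_eq (A : Finset (Fin 5)) : x16 A = if A ∈ supp16 then 1 / 4 else 0 := by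
  simp only [x16, supp16, mem_insert, mem_singleton]

lemma x16_pos_of_mem {A : Finset (Fin 5)} (hA : A ∈ supp16) : 0 < x16 A := by
  rw [x16_eq, if_pos hA]
  norm_num

lemma sum_filter_x16 (P : Finset (Fin 5) → Prop) [DecidablePred P] :
    ∑ A ∈ univ.filter P, x16 A = #(supp16.filter P) / 4 := by
  simp only [x16_eq, sum_ite_mem, sum_const, nsmul_eq_mul, filter_inter, univ_inter]
  ring

lemma sum_x16_mul (f : Finset (Fin 5) → ℚ) :
    ∑ A, x16 A * f A = (f {1, 3} + f {1, 4} + f {3, 4} + f {0, 1, 4}) / 4 := by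
  simp only [x16_eq, ite_mul, zero_mul, sum_ite_mem, univ_inter]
  rw [supp16, sum_insert (by decide), sum_insert (by decide), sum_insert (by decide),
    sum_singleton]
  ring

lemma card_filter_supp16_lt_card_inter_le (W' : Finset (Fin 5)) (h : #W' ≤ 3) :
    #(supp16.filter fun A => #(A ∩ {0, 1, 2}) < #(A ∩ W')) ≤ #W' := by
  revert W'
  decide

lemma droop_core_stable_x16 :
    ∀ W' : Finset (Fin 5), W'.Nonempty → W'.card ≤ 3 →
      (∑ A ∈ Finset.univ.filter
          (fun A : Finset (Fin 5) =>
            (A ∩ ({0, 1, 2} : Finset (Fin 5))).card < (A ∩ W').card), x16 A)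
        ≤ (W'.card : ℚ) / 4 := by
  intro W' _ hW'
  rw [sum_filter_x16]
  gcongr
  exact_mod_cast card_filter_supp16_lt_card_inter_le W' hW'

lemma not_weakly_priceable_x16 :
    ¬ ∃ p : Finset (Fin 5) → Fin 5 → ℚ,
        (∀ A c, 0 ≤ p A c) ∧
        (∀ c, (∑ A : Finset (Fin 5), x16 A * p A c) ≤ 1 / 3) ∧
        (∀ A : Finset (Fin 5), 0 < x16 A →
          ∀ d ∈ A \ ({0, 1, 2} : Finset (Fin 5)),
            1 < ∑ c ∈ insert d (A ∩ ({0, 1, 2} : Finset (Fin 5))), p A c) := by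
  rintro ⟨p, hp, hbudget, hcover⟩
  have h13 := hcover {1, 3} (x16_pos_of_mem (by decide)) 3 (by decide)
  have h14 := hcover {1, 4} (x16_pos_of_mem (by decide)) 4 (by decide)
  have h34₃ := hcover {3, 4} (x16_pos_of_mem (by decide)) 3 (by decide)
  have h34₄ := hcover {3, 4} (x16_pos_of_mem (by decide)) 4 (by decide)
  simp only [Fin.isValue, mem_insert, zero_ne_one, mem_singleton, Fin.reduceEq, or_self,
    not_false_eq_true, inter_insert_of_notMem, or_false, inter_insert_of_mem,
    inter_singleton_of_notMem, insert_empty_eq, sum_insert, sum_singleton] at h13 h14 h34₃ h34₄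
  have b1 := hbudget 1
  have b3 := hbudget 3
  have b4 := hbudget 4
  rw [sum_x16_mul] at b1 b3 b4
  linarith [hp {1, 3} 4, hp {1, 4} 3, hp {3, 4} 1, hp {0, 1, 4} 1, hp {0, 1, 4} 3,
    hp {0, 1, 4} 4]

/-- for `m = 5`, `k = 3`, the committee `W = {c1,c2,c3}` is Droop
core-stable w.r.t. `x16` but not weakly priceable. -/
theorem stmt16 :
    (∀ W' : Finset (Fin 5), W'.Nonempty → W'.card ≤ 3 →
      (∑ A ∈ Finset.univ.filter
          (fun A : Finset (Fin 5) =>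
            (A ∩ ({0, 1, 2} : Finset (Fin 5))).card < (A ∩ W').card), x16 A)
        ≤ (W'.card : ℚ) / 4) ∧
    ¬ (∃ p : Finset (Fin 5) → Fin 5 → ℚ,
        (∀ A c, 0 ≤ p A c) ∧
        (∀ c, (∑ A : Finset (Fin 5), x16 A * p A c) ≤ 1 / 3) ∧
        (∀ A : Finset (Fin 5), 0 < x16 A →
          ∀ d ∈ A \ ({0, 1, 2} : Finset (Fin 5)),
            1 < ∑ c ∈ insert d (A ∩ ({0, 1, 2} : Finset (Fin 5))), p A c)) :=
  ⟨droop_core_stable_x16, not_weakly_priceable_x16⟩
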